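/- Let M, B, K be real symmetric positive semidefinite q×q matrices with MK = 0, let m₀, k₀ > 0, and suppose ω > 0 and ξ ∈ ℂ^q nonzero satisfy Bξ = 0 and ((K + k₀I) − ω²(M + m₀I))ξ = 0. Then there exists μ ∈ ℝ such that (B + i(K − M))ξ = iμξ. -/

import Mathlib

/-!
Write `λ = ω²m₀ - k₀`, so the hypothesis reads `Kξ = ω²Mξ + λξ`. Since `MK = KM = 0`, applying
`M` and `K` gives `ω²M²ξ = -λMξ` and `K²ξ = λKξ`. For a positive semidefinite `A`,
`A²x = cAx` with `c ≤ 0` forces `Ax = 0` (as `‖Ax‖² = c⟪x, Ax⟫ ≤ 0`). Hence `Mξ = 0` if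
`λ ≥ 0` and `Kξ = 0` if `λ < 0`; either way `ξ` is an eigenvector of both `M` and `K` with
real eigenvalues, so of `K - M`, while `Bξ = 0`.
-/

open Matrix Complex

open scoped ComplexOrder MatrixOrder

namespace Matrix

variable {n 𝕜 : Type*} [Fintype n] [RCLike 𝕜]

theorem IsHermitian.mul_eq_zero_comm {A B : Matrix n n 𝕜} (hA : A.IsHermitian)
    (hB : B.IsHermitian) (h : A * B = 0) : B * A = 0 := by
  simpa [conjTranspose_mul, hA.eq, hB.eq] using congrArg (·ᴴ) h

theorem PosSemidef.mulVec_eq_zero_of_mulVec_mulVec_eq_smul {A : Matrix n n 𝕜}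
    (hA : A.PosSemidef) {c : ℝ} (hc : c ≤ 0) {x : n → 𝕜}
    (h : A *ᵥ (A *ᵥ x) = (c : 𝕜) • (A *ᵥ x)) : A *ᵥ x = 0 := by
  have hnorm : star (A *ᵥ x) ⬝ᵥ (A *ᵥ x) = (c : 𝕜) * (star x ⬝ᵥ (A *ᵥ x)) := by
    rw [star_mulVec, ← dotProduct_mulVec, hA.isHermitian.eq, h, dotProduct_smul, smul_eq_mul]
  refine dotProduct_star_self_eq_zero.mp (le_antisymm ?_ (dotProduct_star_self_nonneg _))
  rw [hnorm]
  exact mul_nonpos_of_nonpos_of_nonneg (RCLike.ofReal_nonpos.mpr hc)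
    (hA.dotProduct_mulVec_nonneg x)

theorem PosSemidef.exists_common_eigen_of_mul_eq_zero {M K : Matrix n n 𝕜}
    (hM : M.PosSemidef) (hK : K.PosSemidef) (hMK : M * K = 0) {lam : ℝ} {ξ : n → 𝕜}
    (h : K *ᵥ ξ = M *ᵥ ξ + (lam : 𝕜) • ξ) :
    ∃ α β : ℝ, M *ᵥ ξ = (α : 𝕜) • ξ ∧ K *ᵥ ξ = (β : 𝕜) • ξ := by
  have hKM : K * M = 0 := hM.isHermitian.mul_eq_zero_comm hK.isHermitian hMK
  rcases le_or_gt 0 lam with hlam | hlam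
  · have hMMξ : M *ᵥ (M *ᵥ ξ) = ((-lam : ℝ) : 𝕜) • (M *ᵥ ξ) := by
      have hMKξ : M *ᵥ (K *ᵥ ξ) = 0 := by rw [mulVec_mulVec, hMK, zero_mulVec]
      rw [h, mulVec_add, mulVec_smul] at hMKξ
      push_cast
      linear_combination (norm := module) hMKξ
    have hMξ := hM.mulVec_eq_zero_of_mulVec_mulVec_eq_smul (neg_nonpos.mpr hlam) hMMξ
    exact ⟨0, lam, by simp [hMξ], by simp [h, hMξ]⟩
  · have hKKξ : K *ᵥ (K *ᵥ ξ) = (lam : 𝕜) • (K *ᵥ ξ) := by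
      rw [h, mulVec_add, mulVec_smul, mulVec_mulVec, hKM, zero_mulVec, zero_add, ← h]
    have hKξ := hK.mulVec_eq_zero_of_mulVec_mulVec_eq_smul hlam.le hKKξ
    refine ⟨-lam, 0, ?_, by simp [hKξ]⟩
    push_cast
    linear_combination (norm := module) -h + hKξ

theorem map_ofReal_mul (A B : Matrix n n ℝ) :
    (A * B).map ofReal = A.map ofReal * B.map ofReal :=
  Matrix.map_mul (f := ofRealHom)

theorem PosSemidef.map_ofReal [DecidableEq n] {A : Matrix n n ℝ} (hA : A.PosSemidef) :
    (A.map ofReal).PosSemidef := by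
  obtain ⟨C, rfl⟩ := CStarAlgebra.nonneg_iff_eq_star_mul_self.mp hA.nonneg
  rw [star_eq_conjTranspose, map_ofReal_mul, conjTranspose_map _ fun x => (conj_ofReal x).symm]
  exact posSemidef_conjTranspose_mul_self _

theorem PosSemidef.exists_sub_mulVec_eq_smul_of_mul_eq_zero {M K : Matrix n n 𝕜}
    (hM : M.PosSemidef) (hK : K.PosSemidef) (hMK : M * K = 0) {a lam : ℝ} (ha : 0 < a) {ξ : n → 𝕜}
    (h : K *ᵥ ξ = (a : 𝕜) • (M *ᵥ ξ) + (lam : 𝕜) • ξ) :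
    ∃ μ : ℝ, (K - M) *ᵥ ξ = (μ : 𝕜) • ξ := by
  obtain ⟨α, β, hα, hβ⟩ := (hM.smul ha.le).exists_common_eigen_of_mul_eq_zero hK
    (by rw [smul_mul, hMK, smul_zero])
    (by rwa [smul_mulVec, RCLike.real_smul_eq_coe_smul (K := 𝕜)])
  rw [smul_mulVec, RCLike.real_smul_eq_coe_smul (K := 𝕜)] at hα
  refine ⟨β - α / a, ?_⟩
  have ha' : (a : 𝕜) ≠ 0 := RCLike.ofReal_ne_zero.mpr ha.ne'
  rw [sub_mulVec, hβ, (eq_inv_smul_iff₀ ha').mpr hα, smul_smul, ← sub_smul]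
  push_cast
  ring_nf

end Matrix

theorem stmt_16_general {q : ℕ} (M B K : Matrix (Fin q) (Fin q) ℝ)
    (hM : M.PosSemidef) (hK : K.PosSemidef)
    (hMK : M * K = 0) (m₀ k₀ : ℝ)
    (ω : ℝ) (hω : 0 < ω) (ξ : Fin q → ℂ)
    (hBξ : (B.map Complex.ofReal) *ᵥ ξ = 0)
    (h : ((K.map Complex.ofReal + (k₀ : ℂ) • (1 : Matrix (Fin q) (Fin q) ℂ)) -
        ((ω : ℂ)^2) • (M.map Complex.ofReal + (m₀ : ℂ) • (1 : Matrix (Fin q) (Fin q) ℂ)))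
        *ᵥ ξ = 0) :
    ∃ μ : ℝ, (B.map Complex.ofReal +
        Complex.I • (K.map Complex.ofReal - M.map Complex.ofReal)) *ᵥ ξ =
        (Complex.I * μ) • ξ := by
  have hKξ : K.map ofReal *ᵥ ξ =
      ((ω ^ 2 : ℝ) : ℂ) • (M.map ofReal *ᵥ ξ) + ((ω ^ 2 * m₀ - k₀ : ℝ) : ℂ) • ξ := by
    simp only [sub_mulVec, add_mulVec, smul_mulVec, one_mulVec] at h
    push_cast
    linear_combination (norm := module) h
  obtain ⟨μ, hμ⟩ := hM.map_ofReal.exists_sub_mulVec_eq_smul_of_mul_eq_zero hK.map_ofReal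
    (by rw [← map_ofReal_mul, hMK, Matrix.map_zero _ ofReal_zero]) (pow_pos hω 2) hKξ
  refine ⟨μ, ?_⟩
  rw [add_mulVec, hBξ, zero_add, smul_mulVec, hμ, RCLike.ofReal_eq_complex_ofReal, mul_smul]

theorem stmt_16 {q : ℕ} (M B K : Matrix (Fin q) (Fin q) ℝ)
    (hM : M.PosSemidef) (hB : B.PosSemidef) (hK : K.PosSemidef)
    (hMK : M * K = 0) (m₀ k₀ : ℝ) (hm₀ : 0 < m₀) (hk₀ : 0 < k₀)
    (ω : ℝ) (hω : 0 < ω) (ξ : Fin q → ℂ) (hξ : ξ ≠ 0)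
    (hBξ : (B.map Complex.ofReal) *ᵥ ξ = 0)
    (h : ((K.map Complex.ofReal + (k₀ : ℂ) • (1 : Matrix (Fin q) (Fin q) ℂ)) -
        ((ω : ℂ)^2) • (M.map Complex.ofReal + (m₀ : ℂ) • (1 : Matrix (Fin q) (Fin q) ℂ)))
        *ᵥ ξ = 0) :
    ∃ μ : ℝ, (B.map Complex.ofReal +
        Complex.I • (K.map Complex.ofReal - M.map Complex.ofReal)) *ᵥ ξ =
        (Complex.I * μ) • ξ :=
  stmt_16_general M B K hM hK hMK m₀ k₀ ω hω ξ hBξ h
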